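/- For D a southwest diagram and c any column index, the diagram R_c^*(D), obtained by applying the rectification operator R_c to D repeatedly until it acts trivially, is also southwest. In particular, rect(D) is a composition diagram. -/

import Mathlib

/-!
Definitions for Kohnert diagrams, Kohnert crystals, rectification, Kohnert labelings,
Demazure characters and Kohnert polynomials, following Assaf,
"Demazure crystals for Kohnert polynomials".
-/

namespace Kohnert

/-- A cell `(c, r)` records a column index `c` and a row index `r`. -/
abbrev Cell : Type := ℕ × ℕ

/-- A diagram is a finite set of cells whose coordinates are at least `1`. -/
def IsDiagram (D : Finset Cell) : Prop := ∀ x ∈ D, 1 ≤ x.1 ∧ 1 ≤ x.2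

/-- A diagram is southwest if whenever `(c₁,r₂)` and `(c₂,r₁)` are cells with
`r₁ < r₂` and `c₁ < c₂`, then `(c₁,r₁)` is also a cell. -/
def Southwest (D : Finset Cell) : Prop :=
  ∀ c₁ c₂ r₁ r₂, (c₁, r₂) ∈ D → (c₂, r₁) ∈ D → r₁ < r₂ → c₁ < c₂ → (c₁, r₁) ∈ D

/-- The weight of a diagram: its `r`-th entry is the number of cells in row `r`. -/
noncomputable def wt (T : Finset Cell) : ℕ →₀ ℕ := ∑ x ∈ T, Finsupp.single x.2 1

/-- A single Kohnert move: the rightmost cell `(c,r)` of some row moves down within its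
column to the highest empty position `(c,r')` below it (jumping over occupied positions
as needed), provided such a position with `r' ≥ 1` exists. -/
def KohnertMove (T S : Finset Cell) : Prop :=
  ∃ c r r', (c, r) ∈ T ∧ (∀ c', (c', r) ∈ T → c' ≤ c) ∧
    1 ≤ r' ∧ r' < r ∧ (c, r') ∉ T ∧ (∀ s, r' < s → s < r → (c, s) ∈ T) ∧
    S = insert (c, r') (T.erase (c, r))

/-- `KD D` is the set of diagrams obtainable from `D` by a (possibly empty) sequence of
Kohnert moves. -/
def KD (D : Finset Cell) : Set (Finset Cell) := {T | Relation.ReflTransGen KohnertMove D T}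

/-! ### Row pairing and the crystal raising and lowering operators -/

/-- Columns of the cells of row `i+1` having no cell of row `i` below them. -/
def freeUpCols (T : Finset Cell) (i : ℕ) : Finset ℕ :=
  (T.filter fun x => x.2 = i + 1 ∧ (x.1, i) ∉ T).image Prod.fst

/-- Columns of the cells of row `i` having no cell of row `i+1` above them. -/
def freeDownCols (T : Finset Cell) (i : ℕ) : Finset ℕ :=
  (T.filter fun x => x.2 = i ∧ (x.1, i + 1) ∉ T).image Prod.fst

/-- The cell `(c, i+1)` of `T` is not `i`-paired: cells of rows `i` and `i+1` in a common
column are `i`-paired with each other, and the remaining cells are matched by the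
iterative rule pairing a cell of row `i` with a cell of row `i+1` strictly to its right
whenever all cells of the two rows strictly between them are already `i`-paired.  This is
the standard bracketing characterization of the resulting matching. -/
def UnpairedUp (T : Finset Cell) (i c : ℕ) : Prop :=
  (c, i + 1) ∈ T ∧ (c, i) ∉ T ∧
    ((freeDownCols T i).filter (fun d => d < c)).card <
      ((freeUpCols T i).filter (fun d => d ≤ c)).card

/-- The cell `(c, i)` of `T` is not `i`-paired. -/
def UnpairedDown (T : Finset Cell) (i c : ℕ) : Prop :=
  (c, i) ∈ T ∧ (c, i + 1) ∉ T ∧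
    ((freeUpCols T i).filter (fun d => c < d)).card <
      ((freeDownCols T i).filter (fun d => c ≤ d)).card

/-- A cell of `T` lying in row `i` or `i+1` is `i`-paired. -/
def RowPaired (T : Finset Cell) (i : ℕ) (x : Cell) : Prop :=
  x ∈ T ∧ ((x.2 = i + 1 ∧ ¬ UnpairedUp T i x.1) ∨ (x.2 = i ∧ ¬ UnpairedDown T i x.1))

open Classical in
/-- The raising operator `e_i`: move the rightmost non-`i`-paired cell of row `i+1`
down to row `i`, staying within its column; if every cell of row `i+1` is `i`-paired,
the result is `none` (that is, `e_i(T) = 0`). -/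
noncomputable def raise (i : ℕ) (T : Finset Cell) : Option (Finset Cell) :=
  if ∃ c, UnpairedUp T i c then
    some (insert (sSup {c | UnpairedUp T i c}, i) (T.erase (sSup {c | UnpairedUp T i c}, i + 1)))
  else none

open Classical in
/-- The lowering operator `f_i` relative to `D`: move the leftmost non-`i`-paired cell of
row `i` up to row `i+1`, staying within its column, provided the result lies in `KD D`;
otherwise the result is `none` (that is, `f_i(T) = 0`). -/
noncomputable def lower (D : Finset Cell) (i : ℕ) (T : Finset Cell) : Option (Finset Cell) :=
  if ∃ c, UnpairedDown T i c then
    if insert (sInf {c | UnpairedDown T i c}, i + 1)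
        (T.erase (sInf {c | UnpairedDown T i c}, i)) ∈ KD D then
      some (insert (sInf {c | UnpairedDown T i c}, i + 1)
        (T.erase (sInf {c | UnpairedDown T i c}, i)))
    else none
  else none

/-- One raising-operator step. -/
def RaiseStep (T S : Finset Cell) : Prop := ∃ i, 1 ≤ i ∧ raise i T = some S

/-- A highest weight diagram: every raising operator vanishes on it. -/
def HighestWeight (U : Finset Cell) : Prop := ∀ r, 1 ≤ r → raise r U = none

/-- The equivalence relation generated by `T ∼ e_i(T)` whenever `e_i(T) ≠ 0`. -/
def CrystalEquiv : Finset Cell → Finset Cell → Prop := Relation.EqvGen RaiseStep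

/-- `K` is a connected component of the Kohnert crystal on `KD D`. -/
def IsComponent (D : Finset Cell) (K : Set (Finset Cell)) : Prop :=
  ∃ T₀ ∈ KD D, K = {S | S ∈ KD D ∧ CrystalEquiv S T₀}

/-! ### Column pairing and rectification -/

/-- Rows of the cells of column `c` having no cell of column `c+1` in their row. -/
def freeLeftRows (T : Finset Cell) (c : ℕ) : Finset ℕ :=
  (T.filter fun x => x.1 = c ∧ (c + 1, x.2) ∉ T).image Prod.snd

/-- Rows of the cells of column `c+1` having no cell of column `c` in their row. -/
def freeRightRows (T : Finset Cell) (c : ℕ) : Finset ℕ :=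
  (T.filter fun x => x.1 = c + 1 ∧ (c, x.2) ∉ T).image Prod.snd

/-- The cell `(c+1, r)` of `T` is not column `c`-paired: cells of columns `c` and `c+1`
in a common row are paired with each other, and the remaining cells are matched by the
iterative rule pairing a cell of column `c+1` with a cell of column `c` strictly above it
whenever all cells of the two columns strictly between them are already paired. -/
def ColUnpaired (T : Finset Cell) (c r : ℕ) : Prop :=
  (c + 1, r) ∈ T ∧ (c, r) ∉ T ∧
    ((freeLeftRows T c).filter (fun s => r < s)).card <
      ((freeRightRows T c).filter (fun s => r ≤ s)).card

open Classical in
/-- The rectification operator `R_c`: move the lowest non-column-`c`-paired cell of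
column `c+1` left to column `c`, staying within its row; if every cell of column `c+1`
is column `c`-paired, do nothing. -/
noncomputable def rectify (c : ℕ) (T : Finset Cell) : Finset Cell :=
  if ∃ r, ColUnpaired T c r then
    insert (c, sInf {r | ColUnpaired T c r}) (T.erase (c + 1, sInf {r | ColUnpaired T c r}))
  else T

/-- `R_c^*`: apply `R_c` until it acts trivially (at most `T.card` nontrivial
applications are possible, since each moves a distinct cell of column `c+1`). -/
noncomputable def rectifyStar (c : ℕ) (T : Finset Cell) : Finset Cell := (rectify c)^[T.card] T

/-- A diagram is rectified: for all `c, r ≥ 1`,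
`#{s ≥ r : (c,s) ∈ T} ≥ #{s ≥ r : (c+1,s) ∈ T}`. -/
def Rectified (T : Finset Cell) : Prop :=
  ∀ c r, 1 ≤ c → 1 ≤ r →
    (T.filter fun x => x.1 = c + 1 ∧ r ≤ x.2).card ≤ (T.filter fun x => x.1 = c ∧ r ≤ x.2).card

/-- One rectification-operator step. -/
def RectStep (T S : Finset Cell) : Prop := ∃ c, 1 ≤ c ∧ S = rectify c T

open Classical in
/-- The rectification of a diagram: the (unique) rectified diagram obtained by applying
rectification operators, in any order, until all act trivially. -/
noncomputable def rect (T : Finset Cell) : Finset Cell :=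
  if h : ∃ S, Relation.ReflTransGen RectStep T S ∧ Rectified S then h.choose else T

/-- `T` is the composition diagram `{(c,r) : 1 ≤ c ≤ a r}` of the weak composition `a`. -/
def IsCompDiagramOf (T : Finset Cell) (a : ℕ → ℕ) : Prop :=
  ∀ c r, (c, r) ∈ T ↔ 1 ≤ c ∧ 1 ≤ r ∧ c ≤ a r

/-- `T` is a composition diagram. -/
def IsCompositionDiagram (T : Finset Cell) : Prop := ∃ a : ℕ → ℕ, IsCompDiagramOf T a

/-! ### Labelings of diagrams -/

/-- A labeling assigns an integer label to each cell of a diagram. -/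
abbrev Labeling := Cell → ℕ

/-- A labeling is flagged if every cell in row `r` has label at least `r`. -/
def Flagged (T : Finset Cell) (L : Labeling) : Prop := ∀ x ∈ T, x.2 ≤ L x

/-- The diagram `𝔻(L)` recording the labels: a cell `(c, r)` whenever column `c` of `T`
contains a cell labeled `r`. -/
def labelDiagram (T : Finset Cell) (L : Labeling) : Finset Cell := T.image fun x => (x.1, L x)

/-- The set of rows of the cells of column `c`. -/
def colRows (T : Finset Cell) (c : ℕ) : Finset ℕ := (T.filter fun x => x.1 = c).image Prod.snd

/-- The element of `s` maximizing `f` (taking the largest such element). -/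
noncomputable def argmaxIn (f : ℕ → ℕ) (s : Finset ℕ) : Option ℕ :=
  if h : s.Nonempty then
    some ((s.filter fun a => f a = s.sup' h f).max' (by
      obtain ⟨b, hb, he⟩ := Finset.exists_mem_eq_sup' h f
      exact ⟨b, Finset.mem_filter.2 ⟨hb, he.symm⟩⟩))
  else none

/-- Greedy label `c`-pairing: process the rows of column `c+1` in the given order; the
cell in row `r` is paired with the still-available cell of column `c` lying weakly above
it whose label is largest among those with label at most `L (c+1, r)`, if one exists. -/
noncomputable def labelPairList (L : Labeling) (c : ℕ) :
    List ℕ → Finset ℕ → List (ℕ × Option ℕ)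
  | [], _ => []
  | r :: rs, avail =>
    match argmaxIn (fun s => L (c, s)) (avail.filter fun s => r ≤ s ∧ L (c, s) ≤ L (c + 1, r)) with
    | none => (r, none) :: labelPairList L c rs avail
    | some s => (r, some s) :: labelPairList L c rs (avail.erase s)

/-- The label `c`-pairing of `T` with respect to `L`, processing the cells of column
`c+1` from top to bottom. -/
noncomputable def labelPairing (L : Labeling) (T : Finset Cell) (c : ℕ) : List (ℕ × Option ℕ) :=
  labelPairList L c (((colRows T (c + 1)).sort (· ≤ ·)).reverse) (colRows T c)

/-- The row of the cell of column `c` label `c`-paired with the cell `(c+1, r)`, if any. -/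
noncomputable def labelPartner (L : Labeling) (T : Finset Cell) (c r : ℕ) : Option ℕ :=
  ((labelPairing L T c).lookup r).join

open Classical in
/-- The swapping pass in the construction of the rectified labeling: for each label
`c`-unpaired cell `x` of column `c+1` (processed from highest to lowest), if there are
label `c`-paired cells `y` (in column `c`) and `z` (in column `c+1`) with `z` above `x`
and `L(y) ≤ L'(x) < L'(z)`, swap the labels of `x` and such `z` with `L'(z)` maximal. -/
noncomputable def swapPass (L0 : Labeling) (T : Finset Cell) (c : ℕ) :
    List ℕ → Labeling → Labeling
  | [], L' => L'
  | r :: rs, L' =>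
    match argmaxIn (fun s => L' (c + 1, s)) ((colRows T (c + 1)).filter fun s =>
        r < s ∧ ∃ t ∈ colRows T c, labelPartner L0 T c s = some t ∧
          L0 (c, t) ≤ L' (c + 1, r) ∧ L' (c + 1, r) < L' (c + 1, s)) with
    | none => swapPass L0 T c rs L'
    | some z => swapPass L0 T c rs
        (Function.update (Function.update L' (c + 1, r) (L' (c + 1, z))) (c + 1, z) (L' (c + 1, r)))

/-- The label `c`-unpaired rows of column `c+1`, from highest to lowest. -/
noncomputable def unpairedDesc (L : Labeling) (T : Finset Cell) (c : ℕ) : List ℕ :=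
  (((colRows T (c + 1)).filter fun r => labelPartner L T c r = none).sort (· ≤ ·)).reverse

open Classical in
/-- The relabeling `L'` of `T` at column `c`: perform the swapping pass on the label
`c`-unpaired cells of column `c+1`, then give every label `c`-paired cell of column
`c+1` the label of its partner in column `c`. -/
noncomputable def relabel (L : Labeling) (T : Finset Cell) (c : ℕ) : Labeling :=
  fun x =>
    if x.1 = c + 1 ∧ x ∈ T then
      match labelPartner L T c x.2 with
      | some t => L (c, t)
      | none => swapPass L T c (unpairedDesc L T c) L x
    else L x

open Classical in
/-- The rectified labeling `R_c^*(L)` of `R_c^*(T)`: cells moved from column `c+1` to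
column `c` under rectification carry their relabeled labels with them. -/
noncomputable def rectifyStarLabel (L : Labeling) (T : Finset Cell) (c : ℕ) : Labeling :=
  fun x =>
    if x.1 = c ∧ x ∉ T ∧ (c + 1, x.2) ∈ T ∧ x ∈ rectifyStar c T then
      relabel L T c (c + 1, x.2)
    else relabel L T c x

/-- Labeled rectification at column `c`. -/
noncomputable def rectStarLab (c : ℕ) (p : Finset Cell × Labeling) : Finset Cell × Labeling :=
  (rectifyStar c p.1, rectifyStarLabel p.2 p.1 c)

/-- Apply labeled rectification at each of the given columns in order. -/
noncomputable def sweepLab (cols : List ℕ) (p : Finset Cell × Labeling) :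
    Finset Cell × Labeling :=
  cols.foldl (fun q c => rectStarLab c q) p

/-- The fully rectified labeled diagram, rectifying columns from the rightmost down to
column `lo` and iterating until stable. -/
noncomputable def rectLabFrom (lo : ℕ) (p : Finset Cell × Labeling) : Finset Cell × Labeling :=
  (fun q => sweepLab ((List.range' lo (p.1.sup Prod.fst + 1 - lo)).reverse) q)^[∑ x ∈ p.1, x.1] p

/-- The fully rectified labeled diagram `(rect T, rect L)`. -/
noncomputable def rectLab (p : Finset Cell × Labeling) : Finset Cell × Labeling := rectLabFrom 1 p

open Classical in
/-- Greedy assignment of the given labels (in increasing order) to the available rows of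
column `c`: each label goes to the lowest available row lying weakly above the cell with
that label in column `c+1` of the rectified right part `rp`, if such a cell exists; the
result is `none` when no such assignment is possible. -/
noncomputable def greedyAssign (c : ℕ) (rp : Finset Cell × Labeling) :
    List ℕ → Finset ℕ → Option (List (ℕ × ℕ))
  | [], _ => some []
  | lab :: labs, avail =>
    if h : (avail.filter fun row =>
        ∀ s ∈ colRows rp.1 (c + 1), rp.2 (c + 1, s) = lab → s ≤ row).Nonempty then
      (greedyAssign c rp labs (avail.erase ((avail.filter fun row =>
          ∀ s ∈ colRows rp.1 (c + 1), rp.2 (c + 1, s) = lab → s ≤ row).min' h))).map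
        (fun l => (lab, (avail.filter fun row =>
          ∀ s ∈ colRows rp.1 (c + 1), rp.2 (c + 1, s) = lab → s ≤ row).min' h) :: l)
    else none

open Classical in
/-- Label the rightmost `k` columns `m, m-1, …, m-k+1` of `T` with respect to `D`:
having labeled the columns strictly right of column `c`, rectify that part of `T`
together with its labels (with column `c+1` as the leftmost available column) and then
greedily assign the labels `{r : (c,r) ∈ D}` to the cells of column `c`. -/
noncomputable def labelColsAux (D T : Finset Cell) (m : ℕ) : ℕ → Option Labeling
  | 0 => some fun _ => 0
  | k + 1 =>
    match labelColsAux D T m k with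
    | none => none
    | some L =>
      match greedyAssign (m - k) (rectLabFrom (m - k + 1) (T.filter fun x => m - k < x.1, L))
          ((colRows D (m - k)).sort (· ≤ ·)) (colRows T (m - k)) with
      | none => none
      | some asg =>
        some fun x =>
          if x.1 = m - k then ((asg.find? fun p => p.2 == x.2).map Prod.fst).getD (L x)
          else L x

/-- The Kohnert labeling `L_D` of `T` with respect to `D`, or `none` when it is not
well defined. -/
noncomputable def kohnertLabel (D T : Finset Cell) : Option Labeling :=
  labelColsAux D T (T.sup Prod.fst) (T.sup Prod.fst)

/-- `(T, L)` is a Kohnert tableau of content `a`: (i) for each `i ≥ 1` there is exactly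
one cell labeled `i` in each of columns `1, …, a i` and in no other column; (ii) every
cell in row `r` has label at least `r`; (iii) cells with a common label occupy weakly
descending rows from left to right; (iv) if labels `i < j` occur in one column with `i`
above `j`, there is a cell labeled `i` in the next column strictly above the cell
labeled `j`. -/
def IsKohnertTableau (T : Finset Cell) (L : Labeling) (a : ℕ → ℕ) : Prop :=
  (∀ x ∈ T, 1 ≤ L x) ∧
  (∀ i c, 1 ≤ i → 1 ≤ c → ((∃ x ∈ T, x.1 = c ∧ L x = i) ↔ c ≤ a i)) ∧
  (∀ x ∈ T, ∀ y ∈ T, x.1 = y.1 → L x = L y → x = y) ∧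
  (∀ x ∈ T, x.2 ≤ L x) ∧
  (∀ x ∈ T, ∀ y ∈ T, L x = L y → x.1 < y.1 → y.2 ≤ x.2) ∧
  (∀ x ∈ T, ∀ y ∈ T, x.1 = y.1 → L x < L y → y.2 < x.2 →
    ∃ z ∈ T, z.1 = x.1 + 1 ∧ L z = L x ∧ y.2 < z.2)

/-- `Y ∈ KD D` is Yamanouchi with respect to `D`: the rectification of the Kohnert
labeling `L_D(Y)` is the super-standard labeling of a composition diagram, i.e.
`rect Y` is a composition diagram and each of its cells in row `r` carries label `r`. -/
def Yamanouchi (D Y : Finset Cell) : Prop :=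
  Y ∈ KD D ∧ ∃ L, kohnertLabel D Y = some L ∧
    IsCompositionDiagram (rectLab (Y, L)).1 ∧
    ∀ x ∈ (rectLab (Y, L)).1, (rectLab (Y, L)).2 x = x.2

/-! ### Demazure characters and Kohnert polynomials -/

open MvPolynomial Classical in
/-- The isobaric divided difference operator
`π_i f = ∂_i (x_i f) = (x_i f − s_i · (x_i f)) / (x_i − x_{i+1})`, defined as the unique
polynomial `g` with `g * (x_i − x_{i+1}) = x_i f − s_i · (x_i f)`. -/
noncomputable def piOp (i : ℕ) (f : MvPolynomial ℕ ℤ) : MvPolynomial ℕ ℤ :=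
  if h : ∃ g, g * (X i - X (i + 1)) =
      X i * f - rename (Equiv.swap i (i + 1)) (X i * f) then h.choose else 0

/-- `IsDemazure a f` holds exactly when `f` is the Demazure character `κ_a`:
`κ_λ = x^λ` for `λ` a partition, and `κ_{s_i · a} = π_i κ_a` whenever `a i > a (i+1)`.
Iterating the latter from the sorted partition `λ` of `a` along a chain of strict
descents realizes `κ_a = π_{ρ_ℓ} ⋯ π_{ρ_1} (x_1^{λ_1} ⋯ x_n^{λ_n})` for precisely the
reduced words `(ρ_ℓ, …, ρ_1)` of the minimal-length permutation `w` with `w · λ = a`. -/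
inductive IsDemazure : (ℕ →₀ ℕ) → MvPolynomial ℕ ℤ → Prop
  | base (l : ℕ →₀ ℕ) (h0 : l 0 = 0) (hl : ∀ i, 1 ≤ i → l (i + 1) ≤ l i) :
      IsDemazure l (MvPolynomial.monomial l 1)
  | step (a : ℕ →₀ ℕ) (f : MvPolynomial ℕ ℤ) (i : ℕ) (hi : 1 ≤ i) (hlt : a (i + 1) < a i)
      (h : IsDemazure a f) :
      IsDemazure (a.equivMapDomain (Equiv.swap i (i + 1))) (piOp i f)

open Classical in
/-- `KD D` as a finite set (every Kohnert diagram of `D` lies in the box below `D`). -/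
noncomputable def KDfin (D : Finset Cell) : Finset (Finset Cell) :=
  ((D.biUnion fun x => {x.1} ×ˢ Finset.Icc 1 x.2).powerset).filter (· ∈ KD D)

/-- The Kohnert polynomial `K_D = Σ_{T ∈ KD(D)} x^{wt T}`. -/
noncomputable def kohnertPoly (D : Finset Cell) : MvPolynomial ℕ ℤ :=
  ∑ T ∈ KDfin D, MvPolynomial.monomial (wt T) 1

open Classical in
/-- The set of Yamanouchi diagrams for `D`, as a finite set. -/
noncomputable def YamFin (D : Finset Cell) : Finset (Finset Cell) :=
  (KDfin D).filter (Yamanouchi D)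

/-- The set of column indices of the cells of row `r` of `D`. -/
def rowSet (D : Finset Cell) (r : ℕ) : Finset ℕ := (D.filter fun x => x.2 = r).image Prod.fst

/-- A diagram is vexillary if its rows are totally ordered by inclusion. -/
def Vexillary (D : Finset Cell) : Prop :=
  ∀ r s, rowSet D r ⊆ rowSet D s ∨ rowSet D s ⊆ rowSet D r

/-- The diagram `s_c · D` obtained by exchanging the contents of columns `c` and `c+1`. -/
def swapCols (c : ℕ) (D : Finset Cell) : Finset Cell :=
  D.image fun x => if x.1 = c then (c + 1, x.2) else if x.1 = c + 1 then (c, x.2) else x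

/-!
In a southwest diagram every cell of column `c` lies strictly below every cell of column `c + 1`
with no neighbour in column `c`. Hence none of these free cells is column `c`-paired, and `R_c^*`
moves all of them: column `c` becomes the union of columns `c` and `c + 1`, column `c + 1` their
intersection, and the result is again southwest.

Single steps `R_c` need not preserve southwestness, and `rect D` may be reached by any sequence
of them. They do preserve `LowerRowsDominate`: if row `r` reaches beyond column `γ`, no higher
row has more cells in columns `≤ γ`. A rectified diagram with this property is left-justified:
a gap at `(c, r)` below a cell `(c + 1, r)` forces a free cell of column `c` in some higher row
`s`, and by induction on `c` row `s` is then full up to column `c` while row `r` is not.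
-/

open Finset

section ColumnPairing

variable {T : Finset Cell} {c r : ℕ}

lemma mem_freeLeftRows : r ∈ freeLeftRows T c ↔ (c, r) ∈ T ∧ (c + 1, r) ∉ T := by
  simp [freeLeftRows]

lemma mem_freeRightRows : r ∈ freeRightRows T c ↔ (c + 1, r) ∈ T ∧ (c, r) ∉ T := by
  simp [freeRightRows]

lemma mem_colRows : r ∈ colRows T c ↔ (c, r) ∈ T := by
  simp [colRows]

noncomputable def lowestUnpaired (T : Finset Cell) (c : ℕ) : ℕ := sInf {r | ColUnpaired T c r}

lemma colUnpaired_lowestUnpaired (h : ∃ r, ColUnpaired T c r) :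
    ColUnpaired T c (lowestUnpaired T c) :=
  Nat.sInf_mem h

lemma lowestUnpaired_le (h : ColUnpaired T c r) : lowestUnpaired T c ≤ r :=
  Nat.sInf_le h

lemma rectify_of_exists (h : ∃ r, ColUnpaired T c r) :
    rectify c T = insert (c, lowestUnpaired T c) (T.erase (c + 1, lowestUnpaired T c)) := by
  rw [rectify, if_pos h, lowestUnpaired]

lemma rectify_of_not_exists (h : ¬ ∃ r, ColUnpaired T c r) : rectify c T = T := by
  rw [rectify, if_neg h]

end ColumnPairing

section RectifyStar

def shiftLeft (c : ℕ) (M : Finset ℕ) (T : Finset Cell) : Finset Cell :=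
  T.filter (fun x => ¬ (x.1 = c + 1 ∧ x.2 ∈ M)) ∪ M.image (fun r => (c, r))

def IsInitialFreeRows (D : Finset Cell) (c : ℕ) (M : Finset ℕ) : Prop :=
  M ⊆ freeRightRows D c ∧ ∀ m ∈ M, ∀ r ∈ freeRightRows D c, r < m → r ∈ M

variable {D : Finset Cell} {c : ℕ} {M : Finset ℕ}

lemma mem_shiftLeft {x : Cell} :
    x ∈ shiftLeft c M D ↔
      (x ∈ D ∧ ¬ (x.1 = c + 1 ∧ x.2 ∈ M)) ∨ (x.1 = c ∧ x.2 ∈ M) := by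
  obtain ⟨a, r⟩ := x
  simp only [shiftLeft, mem_union, mem_filter, mem_image, Prod.mk.injEq]
  grind

lemma shiftLeft_empty : shiftLeft c ∅ D = D := by
  ext x
  simp [mem_shiftLeft]

lemma lt_of_southwest (hsw : Southwest D) {a b : ℕ} (ha : (c, a) ∈ D)
    (hb : b ∈ freeRightRows D c) : a < b := by
  rw [mem_freeRightRows] at hb
  by_contra! hba
  rcases hba.eq_or_lt with rfl | hlt
  · exact hb.2 ha
  · exact hb.2 (hsw c (c + 1) b a ha hb.1 hlt (Nat.lt_succ_self c))

lemma colUnpaired_shiftLeft_iff (hsw : Southwest D) (hM : IsInitialFreeRows D c M) {r : ℕ} :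
    ColUnpaired (shiftLeft c M D) c r ↔ r ∈ freeRightRows D c \ M := by
  have hfree : (c + 1, r) ∈ shiftLeft c M D ∧ (c, r) ∉ shiftLeft c M D ↔
      r ∈ freeRightRows D c \ M := by
    simp only [mem_shiftLeft, mem_sdiff, mem_freeRightRows]
    grind
  refine ⟨fun h => hfree.mp ⟨h.1, h.2.1⟩,
    fun hr => ⟨(hfree.mpr hr).1, (hfree.mpr hr).2, ?_⟩⟩
  have hleft : (freeLeftRows (shiftLeft c M D) c).filter (r < ·) = ∅ := by
    refine filter_eq_empty_iff.mpr fun s hs hrs => ?_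
    rw [mem_freeLeftRows, mem_shiftLeft, mem_shiftLeft] at hs
    rw [mem_sdiff] at hr
    rcases hs.1 with ⟨hs, -⟩ | ⟨-, hs⟩
    · exact lt_asymm hrs (lt_of_southwest hsw hs hr.1)
    · exact hr.2 (hM.2 s hs r hr.1 hrs)
  rw [hleft, card_empty, card_pos]
  exact ⟨r, mem_filter.mpr ⟨mem_freeRightRows.mpr (hfree.mpr hr), le_rfl⟩⟩

lemma shiftLeft_insert {r : ℕ} :
    shiftLeft c (insert r M) D = insert (c, r) ((shiftLeft c M D).erase (c + 1, r)) := by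
  ext ⟨a, s⟩
  simp only [mem_insert, mem_erase, mem_shiftLeft, Prod.mk.injEq]
  grind

lemma lowestUnpaired_shiftLeft_mem (hsw : Southwest D) (hM : IsInitialFreeRows D c M)
    (h : ∃ r, ColUnpaired (shiftLeft c M D) c r) :
    lowestUnpaired (shiftLeft c M D) c ∈ freeRightRows D c \ M :=
  (colUnpaired_shiftLeft_iff hsw hM).mp (colUnpaired_lowestUnpaired h)

lemma isInitialFreeRows_insert_lowestUnpaired (hsw : Southwest D) (hM : IsInitialFreeRows D c M)
    (h : ∃ r, ColUnpaired (shiftLeft c M D) c r) :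
    IsInitialFreeRows D c (insert (lowestUnpaired (shiftLeft c M D) c) M) := by
  refine ⟨insert_subset (mem_sdiff.mp (lowestUnpaired_shiftLeft_mem hsw hM h)).1 hM.1, ?_⟩
  intro m hm r hr hrm
  by_contra hrM
  have hr' : ColUnpaired (shiftLeft c M D) c r := (colUnpaired_shiftLeft_iff hsw hM).mpr
    (mem_sdiff.mpr ⟨hr, fun h => hrM (mem_insert_of_mem h)⟩)
  rcases mem_insert.mp hm with rfl | hm
  · exact (lowestUnpaired_le hr').not_gt hrm
  · exact hrM (mem_insert_of_mem (hM.2 m hm r hr hrm))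

lemma iterate_rectify_shiftLeft (hsw : Southwest D) {k : ℕ} {M : Finset ℕ}
    (hM : IsInitialFreeRows D c M) (hk : (freeRightRows D c \ M).card ≤ k) :
    (rectify c)^[k] (shiftLeft c M D) = shiftLeft c (freeRightRows D c) D := by
  by_cases h : ∃ r, ColUnpaired (shiftLeft c M D) c r
  · have hr₀ := lowestUnpaired_shiftLeft_mem hsw hM h
    have hpos : 0 < (freeRightRows D c \ M).card := card_pos.mpr ⟨_, hr₀⟩
    obtain ⟨k, rfl⟩ : ∃ k', k = k' + 1 := Nat.exists_eq_add_one.mpr (by omega)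
    rw [Function.iterate_succ_apply, rectify_of_exists h, ← shiftLeft_insert]
    refine iterate_rectify_shiftLeft hsw (isInitialFreeRows_insert_lowestUnpaired hsw hM h) ?_
    rw [sdiff_insert, card_erase_of_mem hr₀]
    omega
  · have hMF : M = freeRightRows D c := by
      refine Subset.antisymm hM.1 fun r hr => ?_
      by_contra hrM
      exact h ⟨r, (colUnpaired_shiftLeft_iff hsw hM).mpr (mem_sdiff.mpr ⟨hr, hrM⟩)⟩
    rw [Function.iterate_fixed (rectify_of_not_exists h), hMF]
termination_by k

lemma rectifyStar_eq_shiftLeft (hsw : Southwest D) :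
    rectifyStar c D = shiftLeft c (freeRightRows D c) D := by
  have hcard : (freeRightRows D c).card ≤ D.card :=
    card_image_le.trans (card_filter_le _ _)
  rw [rectifyStar, ← iterate_rectify_shiftLeft hsw (M := ∅) ⟨empty_subset _, by simp⟩
    (by simpa using hcard), shiftLeft_empty]

lemma southwest_shiftLeft_freeRightRows (hsw : Southwest D) :
    Southwest (shiftLeft c (freeRightRows D c) D) := by
  intro c₁ c₂ r₁ r₂ h₁ h₂ hr hc
  simp only [mem_shiftLeft, mem_freeRightRows] at h₁ h₂ ⊢
  grind [Southwest]

end RectifyStar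

section Rectified

variable {T : Finset Cell} {c r : ℕ}

def colCount (T : Finset Cell) (c r : ℕ) : ℕ := (T.filter fun x => x.1 = c ∧ r ≤ x.2).card

lemma colCount_eq_card_colRows (T : Finset Cell) (c r : ℕ) :
    colCount T c r = ((colRows T c).filter (r ≤ ·)).card := by
  rw [colCount, colRows, filter_image, filter_filter, card_image_of_injOn]
  intro x hx y hy hxy
  exact Prod.ext ((mem_filter.mp hx).2.1.trans (mem_filter.mp hy).2.1.symm) hxy

/-- Both sides count the rows `≥ r` occupied in column `c` or `c + 1`. -/
lemma colCount_succ_add_card_freeLeftRows (T : Finset Cell) (c r : ℕ) :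
    colCount T (c + 1) r + ((freeLeftRows T c).filter (r ≤ ·)).card =
      colCount T c r + ((freeRightRows T c).filter (r ≤ ·)).card := by
  set A := (colRows T c).filter (r ≤ ·)
  set B := (colRows T (c + 1)).filter (r ≤ ·)
  have hL : (freeLeftRows T c).filter (r ≤ ·) = A \ B := by
    ext
    simp only [A, B, mem_filter, mem_sdiff, mem_freeLeftRows, mem_colRows]
    grind
  have hR : (freeRightRows T c).filter (r ≤ ·) = B \ A := by
    ext
    simp only [A, B, mem_filter, mem_sdiff, mem_freeRightRows, mem_colRows]
    grind
  rw [colCount_eq_card_colRows, colCount_eq_card_colRows, hL, hR, add_comm, card_sdiff_add_card,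
    add_comm A.card, card_sdiff_add_card, union_comm]

lemma colCount_lt_of_colUnpaired (h : ColUnpaired T c r) :
    colCount T c r < colCount T (c + 1) r := by
  obtain ⟨-, hcr, hlt⟩ := h
  have hle : (freeLeftRows T c).filter (r ≤ ·) = (freeLeftRows T c).filter (r < ·) := by
    refine filter_congr fun s hs => ⟨fun hrs => hrs.lt_of_ne ?_, le_of_lt⟩
    rintro rfl
    exact hcr (mem_freeLeftRows.mp hs).1
  have := colCount_succ_add_card_freeLeftRows T c r
  rw [hle] at this
  omega

lemma exists_colUnpaired_of_colCount_lt (h : colCount T c r < colCount T (c + 1) r) :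
    ∃ ρ, ColUnpaired T c ρ := by
  have := colCount_succ_add_card_freeLeftRows T c r
  have hne : ((freeRightRows T c).filter (r ≤ ·)).Nonempty := by
    rw [← card_pos]; omega
  set ρ := ((freeRightRows T c).filter (r ≤ ·)).min' hne
  obtain ⟨hρ, hrρ⟩ := mem_filter.mp (min'_mem _ hne)
  refine ⟨ρ, (mem_freeRightRows.mp hρ).1, (mem_freeRightRows.mp hρ).2, ?_⟩
  have hR : (freeRightRows T c).filter (ρ ≤ ·) = (freeRightRows T c).filter (r ≤ ·) :=
    filter_congr fun s hs => ⟨hrρ.trans, fun hrs => min'_le _ _ (mem_filter.mpr ⟨hs, hrs⟩)⟩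
  have hL : (freeLeftRows T c).filter (ρ < ·) ⊆ (freeLeftRows T c).filter (r ≤ ·) :=
    fun s hs => mem_filter.mpr ⟨(mem_filter.mp hs).1, hrρ.trans (mem_filter.mp hs).2.le⟩
  rw [hR]
  have := card_le_card hL
  omega

lemma exists_colUnpaired_of_not_rectified (h : ¬ Rectified T) :
    ∃ c r, 1 ≤ c ∧ ColUnpaired T c r := by
  simp only [Rectified, not_forall, not_le] at h
  obtain ⟨c, r, hc, -, hlt⟩ := h
  exact ⟨c, exists_colUnpaired_of_colCount_lt hlt |>.imp fun _ h => ⟨hc, h⟩⟩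

lemma not_colUnpaired_of_rectified (hD : IsDiagram T) (h : Rectified T) (hc : 1 ≤ c) :
    ¬ ColUnpaired T c r := fun hu =>
  (h c r hc (hD _ hu.1).2).not_gt (colCount_lt_of_colUnpaired hu)

lemma sum_fst_rectify_add_one (h : ∃ r, ColUnpaired T c r) :
    ∑ x ∈ rectify c T, x.1 + 1 = ∑ x ∈ T, x.1 := by
  obtain ⟨hmem, hnot, -⟩ := colUnpaired_lowestUnpaired h
  rw [rectify_of_exists h, sum_insert (fun h' => hnot (mem_of_mem_erase h')),
    ← sum_erase_add _ _ hmem]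
  ring

lemma exists_rectified (T : Finset Cell) :
    ∃ S, Relation.ReflTransGen RectStep T S ∧ Rectified S := by
  induction hn : ∑ x ∈ T, x.1 using Nat.strong_induction_on generalizing T with
  | _ n ih =>
    by_cases hT : Rectified T
    · exact ⟨T, .refl, hT⟩
    obtain ⟨c, r, hc, hu⟩ := exists_colUnpaired_of_not_rectified hT
    have hsum := sum_fst_rectify_add_one ⟨r, hu⟩
    obtain ⟨S, hS, hSr⟩ := ih _ (by omega) (rectify c T) rfl
    exact ⟨S, .head ⟨c, hc, rfl⟩ hS, hSr⟩

lemma isDiagram_rectify (hc : 1 ≤ c) (hD : IsDiagram T) : IsDiagram (rectify c T) := by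
  by_cases h : ∃ r, ColUnpaired T c r
  · rw [rectify_of_exists h]
    intro x hx
    rcases mem_insert.mp hx with rfl | hx
    · exact ⟨hc, (hD _ (colUnpaired_lowestUnpaired h).1).2⟩
    · exact hD x (mem_of_mem_erase hx)
  · rwa [rectify_of_not_exists h]

end Rectified

section LowerRowsDominate

variable {T : Finset Cell} {c r : ℕ}

def rowCount (T : Finset Cell) (r γ : ℕ) : ℕ := (T.filter fun x => x.2 = r ∧ x.1 ≤ γ).card

lemma rowCount_succ (T : Finset Cell) (r γ : ℕ) :
    rowCount T r (γ + 1) = rowCount T r γ + if (γ + 1, r) ∈ T then 1 else 0 := by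
  rw [rowCount, rowCount, card_filter, card_filter, ← sum_ite_eq' T (γ + 1, r) (fun _ => 1),
    ← sum_add_distrib]
  refine sum_congr rfl fun ⟨a, b⟩ _ => ?_
  simp only [Prod.mk.injEq]
  split_ifs <;> omega

lemma rowCount_rectify (h : ∃ r, ColUnpaired T c r) (ρ γ : ℕ) :
    rowCount (rectify c T) ρ γ =
      rowCount T ρ γ + if ρ = lowestUnpaired T c ∧ γ = c then 1 else 0 := by
  obtain ⟨hmem, hnot, -⟩ := colUnpaired_lowestUnpaired h
  rw [rectify_of_exists h, rowCount, rowCount, card_filter, card_filter,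
    sum_insert (fun h' => hnot (mem_of_mem_erase h')), ← add_sum_erase _ _ hmem]
  split_ifs <;> omega

def LowerRowsDominate (T : Finset Cell) : Prop :=
  ∀ r s γ δ, r < s → (δ, r) ∈ T → γ < δ → rowCount T s γ ≤ rowCount T r γ

lemma lowerRowsDominate_of_southwest (hsw : Southwest T) : LowerRowsDominate T := by
  intro r s γ δ hrs hδ hγ
  refine card_le_card_of_injOn (fun x => (x.1, r)) (fun x hx => ?_) (fun x hx y hy hxy => ?_)
  · obtain ⟨hxT, rfl, hxγ⟩ := mem_filter.mp hx
    exact mem_filter.mpr ⟨hsw x.1 δ r x.2 hxT hδ hrs (by omega), rfl, hxγ⟩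
  · exact Prod.ext (congrArg Prod.fst hxy :)
      ((mem_filter.mp hx).2.1.trans (mem_filter.mp hy).2.1.symm)

lemma exists_mem_col_between_of_colUnpaired {r₀ : ℕ} (h₀ : ColUnpaired T c r₀)
    (hr : r ∈ freeRightRows T c) (hnr : ¬ ColUnpaired T c r) (hlt : r < r₀) :
    ∃ ρ, r < ρ ∧ ρ < r₀ ∧ (c, ρ) ∈ T := by
  obtain ⟨-, hnot, h₀⟩ := h₀
  have hcount : ((freeRightRows T c).filter (r ≤ ·)).card ≤
      ((freeLeftRows T c).filter (r < ·)).card := by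
    by_contra! hgt
    exact hnr ⟨(mem_freeRightRows.mp hr).1, (mem_freeRightRows.mp hr).2, hgt⟩
  have hR : (freeRightRows T c).filter (r₀ ≤ ·) ⊆ (freeRightRows T c).filter (r ≤ ·) :=
    fun s hs => mem_filter.mpr ⟨(mem_filter.mp hs).1, hlt.le.trans (mem_filter.mp hs).2⟩
  obtain ⟨ρ, hρ, hρr₀⟩ := not_subset.mp fun hL :
      (freeLeftRows T c).filter (r < ·) ⊆ (freeLeftRows T c).filter (r₀ < ·) =>
    (card_le_card hL).not_gt (h₀.trans_le ((card_le_card hR).trans hcount))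
  obtain ⟨hρL, hrρ⟩ := mem_filter.mp hρ
  have hρT := (mem_freeLeftRows.mp hρL).1
  have hρr₀ : ρ ≤ r₀ := not_lt.mp fun h => hρr₀ (mem_filter.mpr ⟨hρL, h⟩)
  exact ⟨ρ, hrρ, hρr₀.lt_of_ne fun e => hnot (e ▸ hρT), hρT⟩

/-- With `r₀ = lowestUnpaired T c`: either some row in `[r, r₀)` has a cell in column `c`, or
row `r` misses columns `c` and `c + 1`, since a free cell `(c + 1, r)` would be paired with a free
cell of column `c` strictly between rows `r` and `r₀`. -/
lemma rowCount_lowestUnpaired_lt (hT : LowerRowsDominate T) (h : ∃ r, ColUnpaired T c r)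
    (hc : 1 ≤ c) (hr : r < lowestUnpaired T c) {δ : ℕ} (hδ : (δ, r) ∈ T) (hcδ : c < δ) :
    rowCount T (lowestUnpaired T c) c < rowCount T r c := by
  obtain ⟨hmem, hnot, -⟩ := colUnpaired_lowestUnpaired h
  obtain ⟨d, rfl⟩ : ∃ d, c = d + 1 := ⟨c - 1, by omega⟩
  have e₀ := rowCount_succ T (lowestUnpaired T (d + 1)) d
  rw [if_neg hnot] at e₀
  by_cases hρ : ∃ ρ, r ≤ ρ ∧ ρ < lowestUnpaired T (d + 1) ∧ (d + 1, ρ) ∈ T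
  · obtain ⟨ρ, hrρ, hρr₀, hρ⟩ := hρ
    have e := rowCount_succ T ρ d
    rw [if_pos hρ] at e
    have h₁ := hT ρ _ d (d + 1) hρr₀ hρ (by omega)
    have h₂ : rowCount T ρ (d + 1) ≤ rowCount T r (d + 1) := by
      rcases hrρ.eq_or_lt with rfl | hlt
      · exact le_rfl
      · exact hT r ρ (d + 1) δ hlt hδ hcδ
    omega
  push Not at hρ
  have hcr : (d + 1, r) ∉ T := hρ r le_rfl hr
  have hc1r : (d + 1 + 1, r) ∉ T := fun h' => by
    obtain ⟨ρ, hrρ, hρr₀, hρT⟩ := exists_mem_col_between_of_colUnpaired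
      (colUnpaired_lowestUnpaired h) (mem_freeRightRows.mpr ⟨h', hcr⟩)
      (fun hu => (lowestUnpaired_le hu).not_gt hr) hr
    exact hρ ρ hrρ.le hρr₀ hρT
  have hδ' : d + 1 + 1 < δ := lt_of_le_of_ne hcδ fun e => hc1r (e ▸ hδ)
  have h₁ := hT r _ (d + 1 + 1) δ hr hδ hδ'
  rw [rowCount_succ T _ (d + 1), if_pos hmem, rowCount_succ T r (d + 1), if_neg hc1r] at h₁
  omega

lemma lowerRowsDominate_rectify (hc : 1 ≤ c) (hT : LowerRowsDominate T) :
    LowerRowsDominate (rectify c T) := by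
  by_cases h : ∃ r, ColUnpaired T c r
  swap
  · rwa [rectify_of_not_exists h]
  intro r s γ δ hrs hδ hγ
  have hmem := (colUnpaired_lowestUnpaired h).1
  obtain ⟨δ', hδδ', hδ'⟩ : ∃ δ', δ ≤ δ' ∧ (δ', r) ∈ T := by
    rw [rectify_of_exists h] at hδ
    rcases mem_insert.mp hδ with h' | h'
    · obtain ⟨hδc, rfl⟩ := Prod.mk.inj h'
      exact ⟨c + 1, by omega, hmem⟩
    · exact ⟨δ, le_rfl, mem_of_mem_erase h'⟩
  rw [rowCount_rectify h, rowCount_rectify h]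
  have := hT r s γ δ' hrs hδ' (by omega)
  by_cases hs : s = lowestUnpaired T c ∧ γ = c
  · obtain ⟨rfl, rfl⟩ := hs
    have := rowCount_lowestUnpaired_lt hT h hc hrs hδ' (by omega)
    rw [if_pos ⟨rfl, rfl⟩, if_neg fun h' => hrs.ne h'.1]
    omega
  · rw [if_neg hs]
    split_ifs <;> omega

lemma isDiagram_lowerRowsDominate_of_reflTransGen {S : Finset Cell}
    (hTS : Relation.ReflTransGen RectStep T S) (hD : IsDiagram T) (hT : LowerRowsDominate T) :
    IsDiagram S ∧ LowerRowsDominate S := by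
  induction hTS with
  | refl => exact ⟨hD, hT⟩
  | tail _ hstep ih =>
    obtain ⟨c, hc, rfl⟩ := hstep
    exact ⟨isDiagram_rectify hc ih.1, lowerRowsDominate_rectify hc ih.2⟩

end LowerRowsDominate

section LeftJustified

variable {T : Finset Cell} {c r : ℕ}

def IsLeftJustified (T : Finset Cell) : Prop :=
  ∀ c, 1 ≤ c → ∀ r, (c + 1, r) ∈ T → (c, r) ∈ T

lemma mem_of_le_of_leftClosed (hlj : ∀ a, 1 ≤ a → a < c → (a + 1, r) ∈ T → (a, r) ∈ T)
    (h : (c, r) ∈ T) {j : ℕ} (hj : 1 ≤ j) (hjc : j ≤ c) : (j, r) ∈ T :=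
  Nat.decreasingInduction' (fun k hkc hjk ih => hlj k (hj.trans hjk) hkc ih) hjc h

lemma le_rowCount_of_leftClosed
    (hlj : ∀ a, 1 ≤ a → a < c → (a + 1, r) ∈ T → (a, r) ∈ T) (h : (c, r) ∈ T) :
    c ≤ rowCount T r c := by
  have := card_le_card_of_injOn (s := Icc 1 c) (t := T.filter fun x => x.2 = r ∧ x.1 ≤ c)
    (fun j => (j, r)) (fun j hj => ?_) (fun j _ k _ hjk => congrArg Prod.fst hjk)
  · simpa [rowCount] using this
  · obtain ⟨hj, hjc⟩ := mem_Icc.mp hj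
    exact mem_filter.mpr ⟨mem_of_le_of_leftClosed hlj h hj hjc, rfl, hjc⟩

lemma rowCount_lt_of_notMem (hD : IsDiagram T) (hc : 1 ≤ c) (h : (c, r) ∉ T) :
    rowCount T r c < c := by
  have := card_le_card_of_injOn (s := T.filter fun x => x.2 = r ∧ x.1 ≤ c) (t := Ico 1 c)
    Prod.fst (fun x hx => ?_) (fun x hx y hy hxy => ?_)
  · simp only [Nat.card_Ico] at this
    exact this.trans_lt (by omega)
  · obtain ⟨hxT, rfl, hxc⟩ := mem_filter.mp hx
    refine mem_Ico.mpr ⟨(hD x hxT).1, hxc.lt_of_ne fun e => h ?_⟩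
    rwa [← e]
  · exact Prod.ext hxy ((mem_filter.mp hx).2.1.trans (mem_filter.mp hy).2.1.symm)

lemma isLeftJustified_of_rectified (hD : IsDiagram T) (hT : LowerRowsDominate T)
    (hR : Rectified T) : IsLeftJustified T := by
  intro c
  induction c using Nat.strong_induction_on with
  | _ c ih =>
    intro hc r h₁
    by_contra h₀
    obtain ⟨s, hs⟩ : ((freeLeftRows T c).filter (r < ·)).Nonempty := by
      have hpos : 0 < ((freeRightRows T c).filter (r ≤ ·)).card :=
        card_pos.mpr ⟨r, mem_filter.mpr ⟨mem_freeRightRows.mpr ⟨h₁, h₀⟩, le_rfl⟩⟩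
      rw [← card_pos]
      by_contra! hzero
      exact not_colUnpaired_of_rectified hD hR hc ⟨h₁, h₀, by omega⟩
    obtain ⟨hsL, hrs⟩ := mem_filter.mp hs
    have hsT := (mem_freeLeftRows.mp hsL).1
    have := hT r s c (c + 1) hrs h₁ (Nat.lt_succ_self c)
    have := rowCount_lt_of_notMem hD hc h₀
    have := le_rowCount_of_leftClosed (fun a ha hac => ih a hac ha s) hsT
    omega

lemma isCompositionDiagram_of_isLeftJustified (hD : IsDiagram T) (hlj : IsLeftJustified T) :
    IsCompositionDiagram T := by
  refine ⟨fun r => (T.filter (·.2 = r)).sup Prod.fst,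
    fun c r => ⟨fun h => ?_, fun ⟨hc, _, hca⟩ => ?_⟩⟩
  · have hmem : (c, r) ∈ T.filter (·.2 = r) := mem_filter.mpr ⟨h, rfl⟩
    exact ⟨(hD _ h).1, (hD _ h).2, le_sup (f := Prod.fst) hmem⟩
  · replace hca : c ≤ (T.filter (·.2 = r)).sup Prod.fst := hca
    have hne : (T.filter (·.2 = r)).Nonempty := by
      by_contra hemp
      rw [not_nonempty_iff_eq_empty.mp hemp, sup_empty] at hca
      exact absurd hca (by simp only [bot_eq_zero', nonpos_iff_eq_zero]; omega)
    obtain ⟨⟨m, r'⟩, hx, hm⟩ := exists_mem_eq_sup _ hne Prod.fst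
    obtain ⟨hxT, rfl⟩ := mem_filter.mp hx
    rw [hm] at hca
    exact mem_of_le_of_leftClosed (fun a ha _ => hlj a ha _) hxT hc hca

end LeftJustified

/-- **Proposition (southwest is preserved).** For `D` southwest and any column `c ≥ 1`,
`R_c^*(D)` is southwest; in particular `rect D` is a composition diagram. -/
theorem southwest_rectifyStar (D : Finset Cell) (hD : IsDiagram D) (hsw : Southwest D) :
    (∀ c, 1 ≤ c → Southwest (rectifyStar c D)) ∧ IsCompositionDiagram (rect D) := by
  refine ⟨fun c _ => rectifyStar_eq_shiftLeft hsw ▸ southwest_shiftLeft_freeRightRows hsw, ?_⟩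
  have hex := exists_rectified D
  obtain ⟨hpath, hrect⟩ := hex.choose_spec
  obtain ⟨hS, hdom⟩ :=
    isDiagram_lowerRowsDominate_of_reflTransGen hpath hD (lowerRowsDominate_of_southwest hsw)
  rw [rect, dif_pos hex]
  exact isCompositionDiagram_of_isLeftJustified hS (isLeftJustified_of_rectified hS hdom hrect)

end Kohnert
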